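/- arXiv:1006.1713 — 2 statements merged into one kernel-verified Lean document; each statement's English description precedes it below -/
import Mathlib

section
/- Let A be an n×n complex matrix with rows R_1,…,R_n, and for each i let R_{-i} = span{R_j : j ≠ i}. Then n^{−1/2} · min_{1≤i≤n} dist(R_i, R_{-i}) ≤ s_n(A) ≤ min_{1≤i≤n} dist(R_i, R_{-i}), where s_n(A) is the smallest singular value of A and dist denotes Euclidean distance. -/
open MeasureTheory

/-- The singular values of a rectangular complex matrix (unordered enumeration):
`s_i(A) = sqrt(λ_i(A Aᴴ))`. -/
noncomputable def svals {m n : ℕ} (A : Matrix (Fin m) (Fin n) ℂ) : Fin m → ℝ :=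
  fun i => Real.sqrt ((Matrix.isHermitian_mul_conjTranspose_self A).eigenvalues i)

/-- The `i`-th row of `A` as a vector of the Euclidean space `ℂⁿ`. -/
noncomputable def rowE {m n : ℕ} (A : Matrix (Fin m) (Fin n) ℂ) (i : Fin m) :
    EuclideanSpace ℂ (Fin n) := (WithLp.equiv 2 (Fin n → ℂ)).symm (A i)

open Matrix Finset

/-! The combinations `∑ⱼ cⱼ Rⱼ` of the rows are the vectors `cᵀA`, of norm `‖Aᴴ c̄‖`, and the
Rayleigh bound for `AAᴴ` gives `s_n(A) ‖c‖ ≤ ‖∑ⱼ cⱼ Rⱼ‖`, with equality for `c̄` an eigenvector of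
the smallest eigenvalue. Every `R_i - y` with `y ∈ R_{-i}` is such a combination with `c_i = 1`, so
`‖c‖ ≥ 1` and `s_n(A) ≤ dist(R_i, R_{-i})`. Conversely, a unit minimiser `c` has a coordinate with
`|c_i| ≥ n^{-1/2}`, and dividing its combination by `c_i` gives a point of `R_{-i}` at distance at
most `√n s_n(A)` from `R_i`. -/

section
variable {𝕜 ι E : Type*} [RCLike 𝕜] [Fintype ι] [NormedAddCommGroup E] [InnerProductSpace 𝕜 E]

theorem OrthonormalBasis.mul_norm_sq_le_re_inner_apply_self (b : OrthonormalBasis ι 𝕜 E)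
    {T : E →ₗ[𝕜] E} {μ : ι → ℝ} (hT : ∀ i, T (b i) = (μ i : 𝕜) • b i) {m : ℝ}
    (hm : ∀ i, m ≤ μ i) (x : E) :
    m * ‖x‖ ^ 2 ≤ RCLike.re (inner 𝕜 x (T x)) := by
  have hTx : T x = ∑ i, (μ i * inner 𝕜 (b i) x : 𝕜) • b i := by
    conv_lhs => rw [← b.sum_repr' x]
    simp only [map_sum, map_smul, hT, smul_smul, mul_comm]
  have hre : RCLike.re (inner 𝕜 x (T x)) = ∑ i, μ i * ‖inner 𝕜 (b i) x‖ ^ 2 := by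
    simp only [hTx, inner_sum, inner_smul_right, map_sum]
    refine sum_congr rfl fun i _ => ?_
    rw [← inner_conj_symm x, mul_assoc, RCLike.mul_conj, ← RCLike.ofReal_pow,
      ← RCLike.ofReal_mul, RCLike.ofReal_re]
  rw [hre, ← b.sum_sq_norm_inner_right, mul_sum]
  exact sum_le_sum fun i _ => mul_le_mul_of_nonneg_right (hm i) (by positivity)
end

section
variable {𝕜 E ι : Type*} [NormedField 𝕜] [SeminormedAddCommGroup E] [NormedSpace 𝕜 E]
  [Fintype ι] (v : ι → E) (i : ι)

theorem norm_mul_infDist_span_le_norm_sum_smul (c : ι → 𝕜) :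
    ‖c i‖ * Metric.infDist (v i) (Submodule.span 𝕜 (v '' {j | j ≠ i}))
      ≤ ‖∑ j, c j • v j‖ := by
  classical
  rcases eq_or_ne (c i) 0 with hci | hci
  · simp [hci]
  set y := -(c i)⁻¹ • ∑ j ∈ univ.erase i, c j • v j with hy_def
  have hy : y ∈ Submodule.span 𝕜 (v '' {j | j ≠ i}) :=
    Submodule.smul_mem _ _ <| Submodule.sum_mem _ fun j hj =>
      Submodule.smul_mem _ _ <| Submodule.subset_span ⟨j, (mem_erase.1 hj).1, rfl⟩
  have hdiff : v i - y = (c i)⁻¹ • ∑ j, c j • v j := by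
    rw [hy_def, neg_smul, sub_neg_eq_add, ← add_sum_erase _ _ (mem_univ i), smul_add, smul_smul,
      inv_mul_cancel₀ hci, one_smul]
  calc ‖c i‖ * Metric.infDist (v i) (Submodule.span 𝕜 (v '' {j | j ≠ i}))
      ≤ ‖c i‖ * ‖v i - y‖ := by
        gcongr
        exact (Metric.infDist_le_dist_of_mem hy).trans_eq (dist_eq_norm _ _)
    _ = ‖∑ j, c j • v j‖ := by
        rw [hdiff, norm_smul, norm_inv, mul_inv_cancel_left₀ (norm_ne_zero_iff.2 hci)]

theorem le_infDist_span_of_forall_le_norm_sum_smul {r : ℝ}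
    (h : ∀ c : ι → 𝕜, c i = 1 → r ≤ ‖∑ j, c j • v j‖) :
    r ≤ Metric.infDist (v i) (Submodule.span 𝕜 (v '' {j | j ≠ i})) := by
  classical
  refine (Metric.le_infDist ⟨0, Submodule.zero_mem _⟩).2 fun y hy => ?_
  obtain ⟨l, hl, rfl⟩ := (Finsupp.mem_span_image_iff_linearCombination 𝕜).1 hy
  have hli : l i = 0 := Finsupp.notMem_support_iff.1 fun hi => hl hi rfl
  have := h (Finsupp.single i (1 : 𝕜) - l) (by simp [hli])
  rw [dist_eq_norm]
  convert this using 2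
  simp [Finsupp.linearCombination_apply, Finsupp.sum_fintype, sub_smul, sum_sub_distrib,
    Finsupp.single_apply]
end

namespace Matrix
variable {𝕜 m n : Type*} [RCLike 𝕜] [Fintype m] [Fintype n] [DecidableEq m] [DecidableEq n]

theorem IsHermitian.toEuclideanLin_eigenvectorBasis {B : Matrix n n 𝕜} (hB : B.IsHermitian)
    (i : n) :
    toEuclideanLin B (hB.eigenvectorBasis i) = (hB.eigenvalues i : 𝕜) • hB.eigenvectorBasis i := by
  simpa [toLpLin_apply, ← RCLike.real_smul_eq_coe_smul (K := 𝕜)] using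
    congrArg (WithLp.toLp 2) (hB.mulVec_eigenvectorBasis i)

theorem IsHermitian.mul_norm_sq_le_re_inner {B : Matrix n n 𝕜} (hB : B.IsHermitian) {c : ℝ}
    (hc : ∀ i, c ≤ hB.eigenvalues i) (x : EuclideanSpace 𝕜 n) :
    c * ‖x‖ ^ 2 ≤ RCLike.re (inner 𝕜 x (toEuclideanLin B x)) :=
  hB.eigenvectorBasis.mul_norm_sq_le_re_inner_apply_self
    hB.toEuclideanLin_eigenvectorBasis hc x

theorem re_inner_toEuclideanLin_mul_conjTranspose_self (A : Matrix m n 𝕜)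
    (x : EuclideanSpace 𝕜 m) :
    RCLike.re (inner 𝕜 x (toEuclideanLin (A * Aᴴ) x)) = ‖toEuclideanLin Aᴴ x‖ ^ 2 := by
  rw [toLpLin_mul_same, LinearMap.comp_apply, toEuclideanLin_conjTranspose_eq_adjoint,
    ← LinearMap.adjoint_inner_left, inner_self_eq_norm_sq]
end Matrix

theorem EuclideanSpace.exists_norm_le_sqrt_card_mul_norm_apply {𝕜 ι : Type*} [RCLike 𝕜]
    [Fintype ι] [Nonempty ι] (x : EuclideanSpace 𝕜 ι) :
    ∃ i, ‖x‖ ≤ √(Fintype.card ι) * ‖x i‖ := by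
  obtain ⟨i, hi⟩ := Finite.exists_max fun j => ‖x j‖
  refine ⟨i, ((EuclideanSpace.basisFun ι 𝕜).norm_le_card_mul_iSup_norm_inner x).trans ?_⟩
  simp only [EuclideanSpace.basisFun_inner]
  gcongr
  exact ciSup_le hi

theorem EuclideanSpace.norm_toLp_star {𝕜 ι : Type*} [RCLike 𝕜] [Fintype ι] (w : ι → 𝕜) :
    ‖WithLp.toLp 2 (star w)‖ = ‖WithLp.toLp 2 w‖ := by
  simp [EuclideanSpace.norm_eq]

section
variable {m k : ℕ} (A : Matrix (Fin m) (Fin k) ℂ)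

theorem sq_svals (i : Fin m) :
    svals A i ^ 2 = (isHermitian_mul_conjTranspose_self A).eigenvalues i :=
  Real.sq_sqrt (eigenvalues_self_mul_conjTranspose_nonneg A i)

theorem sum_smul_rowE (c : Fin m → ℂ) : ∑ j, c j • rowE A j = WithLp.toLp 2 (c ᵥ* A) := by
  ext l
  simp [rowE, vecMul, dotProduct]

theorem norm_sum_smul_rowE (c : Fin m → ℂ) :
    ‖∑ j, c j • rowE A j‖ = ‖toEuclideanLin Aᴴ (WithLp.toLp 2 (star c))‖ := by
  rw [sum_smul_rowE, ← EuclideanSpace.norm_toLp_star, star_vecMul]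
  rfl

variable [Nonempty (Fin m)]

theorem inf'_svals_nonneg : 0 ≤ univ.inf' univ_nonempty (svals A) :=
  le_inf' _ _ fun _ _ => Real.sqrt_nonneg _

theorem inf'_svals_mul_norm_le (x : EuclideanSpace ℂ (Fin m)) :
    univ.inf' univ_nonempty (svals A) * ‖x‖ ≤ ‖toEuclideanLin Aᴴ x‖ := by
  set s := univ.inf' univ_nonempty (svals A)
  have hsq : ∀ i, s ^ 2 ≤ (isHermitian_mul_conjTranspose_self A).eigenvalues i := fun i =>
    sq_svals A i ▸ pow_le_pow_left₀ (inf'_svals_nonneg A) (inf'_le _ (mem_univ i)) 2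
  have h := (isHermitian_mul_conjTranspose_self A).mul_norm_sq_le_re_inner hsq x
  rw [re_inner_toEuclideanLin_mul_conjTranspose_self, ← mul_pow] at h
  exact (pow_le_pow_iff_left₀ (mul_nonneg (inf'_svals_nonneg A) (norm_nonneg _)) (norm_nonneg _)
    two_ne_zero).1 h

theorem exists_norm_eq_one_norm_eq_inf'_svals :
    ∃ x : EuclideanSpace ℂ (Fin m), ‖x‖ = 1 ∧
      ‖toEuclideanLin Aᴴ x‖ = univ.inf' univ_nonempty (svals A) := by
  obtain ⟨i, -, hi⟩ := exists_mem_eq_inf' univ_nonempty (svals A)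
  set hB := isHermitian_mul_conjTranspose_self A
  have hx : ‖hB.eigenvectorBasis i‖ = 1 := hB.eigenvectorBasis.orthonormal.1 i
  refine ⟨hB.eigenvectorBasis i, hx, ?_⟩
  rw [hi, ← Real.sqrt_sq (norm_nonneg _), ← re_inner_toEuclideanLin_mul_conjTranspose_self,
    hB.toEuclideanLin_eigenvectorBasis, inner_smul_right, inner_self_eq_norm_sq_to_K, hx]
  simp [svals]

theorem inf'_svals_mul_norm_le_norm_sum_smul_rowE (c : Fin m → ℂ) :
    univ.inf' univ_nonempty (svals A) * ‖WithLp.toLp 2 c‖ ≤ ‖∑ j, c j • rowE A j‖ := by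
  rw [norm_sum_smul_rowE, ← EuclideanSpace.norm_toLp_star]
  exact inf'_svals_mul_norm_le A _

theorem exists_norm_eq_one_norm_sum_smul_rowE_eq_inf'_svals :
    ∃ c : Fin m → ℂ, ‖WithLp.toLp 2 c‖ = 1 ∧
      ‖∑ j, c j • rowE A j‖ = univ.inf' univ_nonempty (svals A) := by
  obtain ⟨x, hx1, hxs⟩ := exists_norm_eq_one_norm_eq_inf'_svals A
  refine ⟨star (WithLp.ofLp x), ?_, ?_⟩
  · rw [EuclideanSpace.norm_toLp_star]; exact hx1
  · rw [norm_sum_smul_rowE, star_star]; exact hxs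

theorem inf'_svals_le_infDist_span_rowE (i : Fin m) :
    univ.inf' univ_nonempty (svals A)
      ≤ Metric.infDist (rowE A i) (Submodule.span ℂ (rowE A '' {j | j ≠ i})) := by
  refine le_infDist_span_of_forall_le_norm_sum_smul _ i fun c hci => ?_
  calc univ.inf' univ_nonempty (svals A)
      = univ.inf' univ_nonempty (svals A) * ‖c i‖ := by rw [hci, norm_one, mul_one]
    _ ≤ univ.inf' univ_nonempty (svals A) * ‖WithLp.toLp 2 c‖ := by
        gcongr
        · exact inf'_svals_nonneg A
        · exact PiLp.norm_apply_le (WithLp.toLp 2 c) i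
    _ ≤ ‖∑ j, c j • rowE A j‖ := inf'_svals_mul_norm_le_norm_sum_smul_rowE A c

theorem exists_infDist_span_rowE_le_sqrt_mul_inf'_svals :
    ∃ i, Metric.infDist (rowE A i) (Submodule.span ℂ (rowE A '' {j | j ≠ i}))
      ≤ √m * univ.inf' univ_nonempty (svals A) := by
  obtain ⟨c, hc1, hcs⟩ := exists_norm_eq_one_norm_sum_smul_rowE_eq_inf'_svals A
  obtain ⟨i, hi⟩ := EuclideanSpace.exists_norm_le_sqrt_card_mul_norm_apply (WithLp.toLp 2 c)
  rw [hc1, Fintype.card_fin] at hi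
  refine ⟨i, ?_⟩
  calc Metric.infDist (rowE A i) (Submodule.span ℂ (rowE A '' {j | j ≠ i}))
      ≤ √m * ‖c i‖ * Metric.infDist (rowE A i) (Submodule.span ℂ (rowE A '' {j | j ≠ i})) :=
        le_mul_of_one_le_left Metric.infDist_nonneg hi
    _ ≤ √m * univ.inf' univ_nonempty (svals A) := by
        rw [mul_assoc, ← hcs]
        gcongr
        exact norm_mul_infDist_span_le_norm_sum_smul _ i c

end

/-- Rudelson–Vershynin row bound: for an `n × n` complex matrix `A` with rows
`R_1, …, R_n`, one has
`n^{-1/2} min_i dist(R_i, span{R_j, j ≠ i}) ≤ s_n(A) ≤ min_i dist(R_i, span{R_j, j ≠ i})`. -/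
theorem rudelson_vershynin_row_bound {n : ℕ} (hn : 0 < n)
    (A : Matrix (Fin n) (Fin n) ℂ) :
    haveI : Nonempty (Fin n) := Fin.pos_iff_nonempty.mp hn
    (n : ℝ) ^ (-(1/2 : ℝ)) *
        (Finset.univ.inf' (Finset.univ_nonempty) fun i =>
          Metric.infDist (rowE A i)
            (Submodule.span ℂ (rowE A '' {j | j ≠ i}) : Set (EuclideanSpace ℂ (Fin n))))
      ≤ Finset.univ.inf' (Finset.univ_nonempty) (svals A) ∧
    Finset.univ.inf' (Finset.univ_nonempty) (svals A)
      ≤ Finset.univ.inf' (Finset.univ_nonempty) (fun i =>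
          Metric.infDist (rowE A i)
            (Submodule.span ℂ (rowE A '' {j | j ≠ i}) : Set (EuclideanSpace ℂ (Fin n)))) := by
  have : Nonempty (Fin n) := Fin.pos_iff_nonempty.mp hn
  refine ⟨?_, le_inf' _ _ fun i _ => inf'_svals_le_infDist_span_rowE A i⟩
  obtain ⟨i, hi⟩ := exists_infDist_span_rowE_le_sqrt_mul_inf'_svals A
  have hn' : (n : ℝ) ^ (-(1/2 : ℝ)) * √n = 1 := by
    rw [Real.sqrt_eq_rpow, ← Real.rpow_add (by exact_mod_cast hn), neg_add_cancel, Real.rpow_zero]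
  calc _ ≤ (n : ℝ) ^ (-(1/2 : ℝ)) * (√n * univ.inf' univ_nonempty (svals A)) := by
        gcongr
        exact (inf'_le _ (mem_univ i)).trans hi
    _ = univ.inf' univ_nonempty (svals A) := by rw [← mul_assoc, hn', one_mul]
end

section
/- Let A be a full-rank n′×n complex matrix with n′ ≤ n, with rows R_1,…,R_{n′}, and let R_{-i} = span{R_j : j ≠ i}. Then ∑_{i=1}^{n′} s_i(A)^{−2} = ∑_{i=1}^{n′} dist(R_i, R_{-i})^{−2}. -/
open Matrix Metric Submodule
open scoped InnerProductSpace ComplexOrder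

section DualVector

variable {𝕜 E ι : Type*} [RCLike 𝕜] [NormedAddCommGroup E] [InnerProductSpace 𝕜 E]

theorem infDist_span_image_ne_eq_inv_norm {v : ι → E} {w : E} {i : ι}
    (hw : w ∈ span 𝕜 (Set.range v)) (hii : ⟪v i, w⟫_𝕜 = 1)
    (hji : ∀ j ≠ i, ⟪v j, w⟫_𝕜 = 0) :
    infDist (v i) (span 𝕜 (v '' {j | j ≠ i}) : Set E) = ‖w‖⁻¹ := by
  set V := span 𝕜 (v '' {j | j ≠ i})
  have hperp : ∀ y ∈ V, ⟪y, w⟫_𝕜 = 0 := by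
    have : V ≤ (𝕜 ∙ w)ᗮ := span_le.mpr <| by
      rintro _ ⟨j, hj, rfl⟩
      exact mem_orthogonal_singleton_iff_inner_left.mpr (hji j hj)
    exact fun y hy => mem_orthogonal_singleton_iff_inner_left.mp (this hy)
  have hw0 : 0 < ‖w‖ := norm_pos_iff.mpr <| by rintro rfl; simp at hii
  obtain ⟨a, z, hz, hwaz⟩ : ∃ a, ∃ z ∈ V, w = a • v i + z := by
    rwa [← Set.insert_image_compl_eq_range v i, mem_span_insert] at hw
  have ha : a = (‖w‖ ^ 2 : ℝ) := by
    have := inner_self_eq_norm_sq_to_K (𝕜 := 𝕜) w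
    nth_rewrite 1 [hwaz] at this
    rw [inner_add_left, inner_smul_left, hii, hperp z hz] at this
    simpa using congr(starRingEnd 𝕜 $this)
  have hlower : ∀ y ∈ V, ‖w‖⁻¹ ≤ dist (v i) y := by
    intro y hy
    have h1 : ⟪v i - y, w⟫_𝕜 = 1 := by rw [inner_sub_left, hii, hperp y hy, sub_zero]
    have := norm_inner_le_norm (𝕜 := 𝕜) (v i - y) w
    rw [h1, norm_one] at this
    rw [dist_eq_norm, inv_le_iff_one_le_mul₀' hw0]
    linarith
  have hmem : v i - a⁻¹ • w ∈ V := by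
    have ha0 : a ≠ 0 := by rw [ha]; exact_mod_cast (pow_pos hw0 2).ne'
    rw [show v i - a⁻¹ • w = -(a⁻¹ • z) by
      rw [hwaz, smul_add, smul_smul, inv_mul_cancel₀ ha0, one_smul]; abel]
    exact V.neg_mem (V.smul_mem _ hz)
  refine le_antisymm ?_ ((le_infDist ⟨0, V.zero_mem⟩).mpr hlower)
  calc infDist (v i) V ≤ dist (v i) (v i - a⁻¹ • w) := infDist_le_dist_of_mem hmem
    _ = ‖w‖⁻¹ := by
      rw [dist_eq_norm, sub_sub_cancel, norm_smul, ha, norm_inv, RCLike.norm_ofReal, abs_sq]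
      field_simp

variable [Fintype ι] [DecidableEq ι]

theorem inner_sum_gram_inv_smul (v : ι → E) (hG : IsUnit (gram 𝕜 v)) (i k : ι) :
    ⟪v k, ∑ j, (gram 𝕜 v)⁻¹ j i • v j⟫_𝕜 = (1 : Matrix ι ι 𝕜) k i := by
  simp_rw [inner_sum, inner_smul_right, mul_comm _ (⟪_, _⟫_𝕜), ← gram_apply (𝕜 := 𝕜) v]
  rw [← mul_apply, mul_nonsing_inv _ ((isUnit_iff_isUnit_det _).mp hG)]

theorem infDist_span_image_ne_zpow_neg_two (v : ι → E) (hG : IsUnit (gram 𝕜 v)) (i : ι) :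
    infDist (v i) (span 𝕜 (v '' {j | j ≠ i}) : Set E) ^ (-2 : ℤ)
      = RCLike.re ((gram 𝕜 v)⁻¹ i i) := by
  set w := ∑ j, (gram 𝕜 v)⁻¹ j i • v j with hw_def
  have hdual : ∀ k, ⟪v k, w⟫_𝕜 = (1 : Matrix ι ι 𝕜) k i := inner_sum_gram_inv_smul v hG i
  have hw : w ∈ span 𝕜 (Set.range v) :=
    sum_mem fun j _ => smul_mem _ _ (subset_span (Set.mem_range_self j))
  have hww : ⟪w, w⟫_𝕜 = starRingEnd 𝕜 ((gram 𝕜 v)⁻¹ i i) := by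
    nth_rewrite 1 [hw_def]
    simp_rw [sum_inner, inner_smul_left, hdual, one_apply, mul_ite, mul_one, mul_zero,
      Finset.sum_ite_eq', Finset.mem_univ, if_true]
  rw [infDist_span_image_ne_eq_inv_norm hw (by simpa using hdual i)
    (fun j hj => by simpa [one_apply_ne hj] using hdual j), _root_.inv_zpow', neg_neg,
    zpow_two, ← sq, ← inner_self_eq_norm_sq (𝕜 := 𝕜), hww, RCLike.conj_re]

theorem sum_infDist_span_image_ne_zpow_neg_two (v : ι → E) (hG : IsUnit (gram 𝕜 v)) :
    ∑ i, infDist (v i) (span 𝕜 (v '' {j | j ≠ i}) : Set E) ^ (-2 : ℤ)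
      = RCLike.re (gram 𝕜 v)⁻¹.trace := by
  simp_rw [infDist_span_image_ne_zpow_neg_two v hG, trace, map_sum, diag_apply]

end DualVector

namespace Matrix.IsHermitian

variable {𝕜 n : Type*} [RCLike 𝕜] [Fintype n] [DecidableEq n] {A : Matrix n n 𝕜}

theorem trace_cfc (hA : A.IsHermitian) (f : ℝ → ℝ) :
    (cfc f A).trace = ∑ i, (f (hA.eigenvalues i) : 𝕜) := by
  rw [hA.cfc_eq, IsHermitian.cfc, Unitary.conjStarAlgAut_apply, trace_mul_cycle,
    Unitary.coe_star_mul_self, one_mul, trace_diagonal]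
  rfl

theorem trace_inv (hA : A.IsHermitian) (h : IsUnit A) :
    A⁻¹.trace = ∑ i, (hA.eigenvalues i : 𝕜)⁻¹ := by
  have hinv : A⁻¹ = cfc (fun x : ℝ => x⁻¹) A := by
    rw [cfc_ringInverse_id A h hA.isSelfAdjoint, nonsing_inv_eq_ringInverse]
  simp [hinv, hA.trace_cfc]

end Matrix.IsHermitian

section Rows

variable {m n : ℕ}

theorem gram_rowE (A : Matrix (Fin m) (Fin n) ℂ) : gram ℂ (rowE A) = (A * Aᴴ)ᵀ := by
  ext k j
  simp [rowE, gram_apply, PiLp.inner_apply, mul_apply]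

theorem linearIndependent_rowE_of_rank_eq {A : Matrix (Fin m) (Fin n) ℂ} (h : A.rank = m) :
    LinearIndependent ℂ (rowE A) := by
  have hA : LinearIndependent ℂ A.row := by
    rw [linearIndependent_iff_card_eq_finrank_span, Fintype.card_fin, Set.finrank]
    exact h.symm.trans (rank_eq_finrank_span_row A)
  exact hA.map' (WithLp.linearEquiv 2 ℂ (Fin n → ℂ)).symm.toLinearMap (LinearEquiv.ker _)

theorem svals_zpow_neg_two (A : Matrix (Fin m) (Fin n) ℂ) (i : Fin m) :
    svals A i ^ (-2 : ℤ) = ((isHermitian_mul_conjTranspose_self A).eigenvalues i)⁻¹ := by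
  rw [svals, _root_.zpow_neg, zpow_ofNat,
    Real.sq_sqrt (eigenvalues_self_mul_conjTranspose_nonneg A i)]

theorem sum_svals_zpow_neg_two {A : Matrix (Fin m) (Fin n) ℂ} (h : IsUnit (A * Aᴴ)) :
    ∑ i, svals A i ^ (-2 : ℤ) = ((A * Aᴴ)⁻¹.trace).re := by
  simp_rw [svals_zpow_neg_two, (isHermitian_mul_conjTranspose_self A).trace_inv h, Complex.re_sum]
  simp

end Rows

theorem tao_vu_negative_second_moment_general {n' n : ℕ}
    (A : Matrix (Fin n') (Fin n) ℂ) (hrank : A.rank = n') :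
    ∑ i : Fin n', (svals A i) ^ (-2 : ℤ)
      = ∑ i : Fin n',
          (Metric.infDist (rowE A i)
            (Submodule.span ℂ (rowE A '' {j | j ≠ i}) : Set (EuclideanSpace ℂ (Fin n))))
          ^ (-2 : ℤ) := by
  have hG : IsUnit (gram ℂ (rowE A)) :=
    (posDef_gram_of_linearIndependent (linearIndependent_rowE_of_rank_eq hrank)).isUnit
  have hB : IsUnit (A * Aᴴ) := by rwa [gram_rowE, isUnit_transpose] at hG
  rw [sum_svals_zpow_neg_two hB, sum_infDist_span_image_ne_zpow_neg_two (rowE A) hG, gram_rowE,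
    ← transpose_nonsing_inv, trace_transpose]
  rfl

/-- Tao–Vu negative second moment identity: if `A` is a full rank `n′ × n` complex
matrix (`n′ ≤ n`) with rows `R_1, …, R_{n′}`, then
`∑_i s_i(A)^{-2} = ∑_i dist(R_i, span{R_j, j ≠ i})^{-2}`. -/
theorem tao_vu_negative_second_moment {n' n : ℕ} (hn : n' ≤ n)
    (A : Matrix (Fin n') (Fin n) ℂ) (hrank : A.rank = n') :
    ∑ i : Fin n', (svals A i) ^ (-2 : ℤ)
      = ∑ i : Fin n',
          (Metric.infDist (rowE A i)
            (Submodule.span ℂ (rowE A '' {j | j ≠ i}) : Set (EuclideanSpace ℂ (Fin n))))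
          ^ (-2 : ℤ) :=
  tao_vu_negative_second_moment_general A hrank
end
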